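/- arXiv:1810.02872 — 3 statements merged into one kernel-verified Lean document; each statement's English description precedes it below -/
import Mathlib

section
/- Let H be a weak Hopf algebra and C a left partial H-module coalgebra via ·. Then the same map · makes C a left H-module coalgebra (in particular h·(k·c) = hk·c for all h,k ∈ H, c ∈ C) if and only if ε(h·c) = ε(ε_s(h)·c) for all h ∈ H and c ∈ C. -/
open TensorProduct Coalgebra

noncomputable section

variable (k : Type*) [Field k]

section WeakHopfDefs

variable (H : Type*) [Ring H] [Algebra k H] [Coalgebra k H]

/-- The target map `ε_t(h) = ε(1₁ h) 1₂` of a weak bialgebra. -/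
def wεt (h : H) : H :=
  (TensorProduct.lid k H)
    ((TensorProduct.map (counit (R := k) ∘ₗ LinearMap.mulRight k h) (LinearMap.id))
      (comul (R := k) (1 : H)))

/-- The source map `ε_s(h) = 1₁ ε(h 1₂)` of a weak bialgebra. -/
def wεs (h : H) : H :=
  (TensorProduct.rid k H)
    ((TensorProduct.map (LinearMap.id) (counit (R := k) ∘ₗ LinearMap.mulLeft k h))
      (comul (R := k) (1 : H)))

/-- A weak Hopf algebra structure on an algebra `H` which is also a coalgebra:
the weak bialgebra axioms together with an antipode `S`. -/
structure WeakHopf : Type _ where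
  /-- Δ is multiplicative -/
  comul_mul : ∀ h g : H, comul (R := k) (h * g) = comul (R := k) h * comul (R := k) g
  /-- ε(hgl) = Σ ε(h g₁) ε(g₂ l) -/
  counit_weak_mul : ∀ h g l : H, counit (R := k) (h * g * l)
      = LinearMap.mul' k k
          ((TensorProduct.map (counit (R := k) ∘ₗ LinearMap.mulLeft k h)
              (counit (R := k) ∘ₗ LinearMap.mulRight k l)) (comul (R := k) g))
  /-- ε(hgl) = Σ ε(h g₂) ε(g₁ l) -/
  counit_weak_mul' : ∀ h g l : H, counit (R := k) (h * g * l)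
      = LinearMap.mul' k k
          ((TensorProduct.map (counit (R := k) ∘ₗ LinearMap.mulLeft k h)
              (counit (R := k) ∘ₗ LinearMap.mulRight k l))
            ((TensorProduct.comm k H H) (comul (R := k) g)))
  /-- (1 ⊗ Δ(1))(Δ(1) ⊗ 1) = Δ²(1) -/
  comul_one_left :
      ((1 : H) ⊗ₜ[k] comul (R := k) (1 : H))
          * ((TensorProduct.assoc k H H H) (comul (R := k) (1 : H) ⊗ₜ[k] (1 : H)))
        = (LinearMap.lTensor H (comul (R := k))) (comul (R := k) (1 : H))
  /-- (Δ(1) ⊗ 1)(1 ⊗ Δ(1)) = Δ²(1) -/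
  comul_one_right :
      ((TensorProduct.assoc k H H H) (comul (R := k) (1 : H) ⊗ₜ[k] (1 : H)))
          * ((1 : H) ⊗ₜ[k] comul (R := k) (1 : H))
        = (LinearMap.lTensor H (comul (R := k))) (comul (R := k) (1 : H))
  /-- the antipode -/
  S : H →ₗ[k] H
  /-- Σ h₁ S(h₂) = ε_t(h) -/
  antipode_t : ∀ h : H,
      LinearMap.mul' k H ((LinearMap.lTensor H S) (comul (R := k) h)) = wεt k H h
  /-- Σ S(h₁) h₂ = ε_s(h) -/
  antipode_s : ∀ h : H,
      LinearMap.mul' k H ((LinearMap.rTensor H S) (comul (R := k) h)) = wεs k H h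
  /-- Σ S(h₁) h₂ S(h₃) = S(h) -/
  antipode_mid : ∀ h : H,
      LinearMap.mul' k H
        ((TensorProduct.map S (LinearMap.mul' k H ∘ₗ LinearMap.lTensor H S))
          ((LinearMap.lTensor H (comul (R := k))) (comul (R := k) h))) = S h

end WeakHopfDefs

section Actions

variable (H : Type*) [Ring H] [Algebra k H] [Coalgebra k H]
variable (C : Type*) [AddCommGroup C] [Module k C] [Coalgebra k C]

/-- The Sweedler sum `Σ (h g₁ · c₁) ε(g₂ · c₂)` appearing in (PMC3). -/
def pmc3RHS (act : H →ₗ[k] C →ₗ[k] C) (h g : H) (c : C) : C :=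
  (TensorProduct.rid k C)
    ((TensorProduct.map
        ((TensorProduct.lift act) ∘ₗ (LinearMap.rTensor C (LinearMap.mulLeft k h)))
        (counit (R := k) ∘ₗ (TensorProduct.lift act)))
      ((TensorProduct.tensorTensorTensorComm k H H C C)
        (comul (R := k) g ⊗ₜ[k] comul (R := k) c)))

/-- The Sweedler sum `Σ ε(g₁ · c₁) (h g₂ · c₂)` appearing in the symmetry condition. -/
def pmc3symRHS (act : H →ₗ[k] C →ₗ[k] C) (h g : H) (c : C) : C :=
  (TensorProduct.lid k C)
    ((TensorProduct.map
        (counit (R := k) ∘ₗ (TensorProduct.lift act))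
        ((TensorProduct.lift act) ∘ₗ (LinearMap.rTensor C (LinearMap.mulLeft k h))))
      ((TensorProduct.tensorTensorTensorComm k H H C C)
        (comul (R := k) g ⊗ₜ[k] comul (R := k) c)))

/-- (MC2)/(PMC2): `Δ(h·c) = (h₁·c₁) ⊗ (h₂·c₂)`. -/
def SweedlerComulCompat (act : H →ₗ[k] C →ₗ[k] C) : Prop :=
  ∀ (h : H) (c : C),
    comul (R := k) (act h c)
      = (TensorProduct.map (TensorProduct.lift act) (TensorProduct.lift act))
          ((TensorProduct.tensorTensorTensorComm k H H C C)
            (comul (R := k) h ⊗ₜ[k] comul (R := k) c))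

/-- `C` is a left partial `H`-module coalgebra via `act` (`act h c = h · c`). -/
structure IsPartialModuleCoalgebra (act : H →ₗ[k] C →ₗ[k] C) : Prop where
  pmc1 : ∀ c : C, act 1 c = c
  pmc2 : SweedlerComulCompat k H C act
  pmc3 : ∀ (h g : H) (c : C), act h (act g c) = pmc3RHS k H C act h g c

/-- `C` is a symmetric left partial `H`-module coalgebra via `act`. -/
structure IsSymmetricPartialModuleCoalgebra (act : H →ₗ[k] C →ₗ[k] C)
    extends IsPartialModuleCoalgebra k H C act : Prop where
  pmc3sym : ∀ (h g : H) (c : C), act h (act g c) = pmc3symRHS k H C act h g c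

/-- `C` is a left `H`-module coalgebra via `act`. -/
structure IsModuleCoalgebra (act : H →ₗ[k] C →ₗ[k] C) : Prop where
  mc1 : ∀ c : C, act 1 c = c
  mc2 : SweedlerComulCompat k H C act
  mc3 : ∀ (h g : H) (c : C), act h (act g c) = act (h * g) c
  mc4 : ∀ (h : H) (c : C), counit (R := k) (act h c) = counit (R := k) (act (wεs k H h) c)

end Actions

end


/-!
By (PMC3), `h·(g·c) = Σ (h g₁·c₁) ε(g₂·c₂)` and `hg·c = hg·(1·c) = Σ (hg 1₁·c₁) ε(1₂·c₂)`.
The condition `ε(x·d) = ε(ε_s(x)·d)` allows applying `ε_s` to the second tensor leg in both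
sums, and in any weak bialgebra `g₁ ⊗ ε_s(g₂) = g 1₁ ⊗ ε_s(1₂)`: write `Δ g = Δ g Δ 1` and use
`ε_s(b x) = ε(b x₁) ε_s(x₂)`, which follows from the weak multiplicativity of `ε`.
-/

open LinearMap

lemma TensorProduct.lid_map {k M N P : Type*} [CommSemiring k] [AddCommMonoid M] [Module k M]
    [AddCommMonoid N] [Module k N] [AddCommMonoid P] [Module k P]
    (f : M →ₗ[k] k) (g : N →ₗ[k] P) (u : M ⊗[k] N) :
    TensorProduct.lid k P (map f g u) = g (TensorProduct.lid k N (rTensor N f u)) := by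
  induction u using TensorProduct.induction_on with
  | zero => simp
  | tmul x y => simp
  | add u v hu hv => simp only [map_add, hu, hv]

section SourceMap

variable {k : Type*} [Field k] {H : Type*} [Ring H] [Algebra k H] [Coalgebra k H]

variable (k H) in
def wεsₗ : H →ₗ[k] H :=
  (TensorProduct.rid k H).toLinearMap ∘ₗ applyₗ (comul (R := k) (1 : H)) ∘ₗ lTensorHom H ∘ₗ
    (mul k H).compr₂ (counit (R := k))

@[simp]
lemma wεsₗ_apply (h : H) : wεsₗ k H h = wεs k H h := rfl

lemma wεs_congr {y y' : H} (hyy' : ∀ z : H, counit (R := k) (y * z) = counit (R := k) (y' * z)) :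
    wεs k H y = wεs k H y' := by
  have : counit (R := k) ∘ₗ mulLeft k y = counit (R := k) ∘ₗ mulLeft k y' := by
    ext z; exact hyy' z
  simp only [wεs, this]

lemma wεs_mul
    (hcounit : ∀ h g l : H, counit (R := k) (h * g * l)
      = mul' k k ((TensorProduct.map (counit (R := k) ∘ₗ mulLeft k h)
          (counit (R := k) ∘ₗ mulRight k l)) (comul (R := k) g)))
    (b x : H) :
    wεs k H (b * x) = TensorProduct.lid k H
      (TensorProduct.map (counit (R := k) ∘ₗ mulLeft k b) (wεsₗ k H) (comul (R := k) x)) := by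
  rw [TensorProduct.lid_map, wεsₗ_apply]
  refine wεs_congr fun z => ?_
  rw [hcounit]
  generalize comul (R := k) x = q
  induction q using TensorProduct.induction_on with
  | zero => simp
  | tmul u v => simp
  | add u v hu hv => simp only [map_add, add_mul, hu, hv]

lemma lTensor_wεs_mul_comul_one
    (hcounit : ∀ h g l : H, counit (R := k) (h * g * l)
      = mul' k k ((TensorProduct.map (counit (R := k) ∘ₗ mulLeft k h)
          (counit (R := k) ∘ₗ mulRight k l)) (comul (R := k) g)))
    (z : H ⊗[k] H) :
    lTensor H (wεsₗ k H) (z * comul (R := k) 1)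
      = TensorProduct.map ((TensorProduct.rid k H).toLinearMap ∘ₗ lTensor H (counit (R := k)) ∘ₗ
          mulLeft k z ∘ₗ comul (R := k)) (wεsₗ k H) (comul (R := k) 1) := by
  induction z using TensorProduct.induction_on with
  | zero => simp
  | add u v hu hv =>
    have : mulLeft k (u + v) = mulLeft k u + mulLeft k v := (mul k (H ⊗[k] H)).map_add u v
    simp only [add_mul, map_add, hu, hv, this, add_comp, comp_add, TensorProduct.map_add_left,
      LinearMap.add_apply]
  | tmul a b =>
    have hb : wεsₗ k H ∘ₗ mulLeft k b = ((TensorProduct.lid k H).toLinearMap ∘ₗ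
        TensorProduct.map (counit (R := k) ∘ₗ mulLeft k b) (wεsₗ k H)) ∘ₗ comul (R := k) := by
      ext x; exact wεs_mul hcounit b x
    have hassoc : TensorProduct.map (mulLeft k a) ((TensorProduct.lid k H).toLinearMap ∘ₗ
          TensorProduct.map (counit (R := k) ∘ₗ mulLeft k b) (wεsₗ k H)) ∘ₗ
          (TensorProduct.assoc k H H H).toLinearMap
        = TensorProduct.map ((TensorProduct.rid k H).toLinearMap ∘ₗ lTensor H (counit (R := k)) ∘ₗ
          mulLeft k (a ⊗ₜ b)) (wεsₗ k H) := by
      refine TensorProduct.ext_threefold fun x y w => ?_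
      simp [TensorProduct.smul_tmul]
    calc lTensor H (wεsₗ k H) ((a ⊗ₜ b) * comul (R := k) 1)
        = TensorProduct.map (mulLeft k a) (wεsₗ k H ∘ₗ mulLeft k b) (comul (R := k) 1) := by
          rw [← mulLeft_apply (R := k), mulLeft_tmul, ← comp_apply, lTensor_comp_map]
      _ = TensorProduct.map (mulLeft k a) ((TensorProduct.lid k H).toLinearMap ∘ₗ
            TensorProduct.map (counit (R := k) ∘ₗ mulLeft k b) (wεsₗ k H))
            (TensorProduct.assoc k H H H (rTensor H (comul (R := k)) (comul (R := k) 1))) := by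
          rw [hb, ← map_comp_lTensor, comp_apply, coassoc_apply]
      _ = _ := by
          rw [← LinearEquiv.coe_toLinearMap, ← comp_apply, hassoc, ← comp_apply,
            map_comp_rTensor]
          rfl

lemma lTensor_wεs_comul
    (hcomul : ∀ h g : H, comul (R := k) (h * g) = comul (R := k) h * comul (R := k) g)
    (hcounit : ∀ h g l : H, counit (R := k) (h * g * l)
      = mul' k k ((TensorProduct.map (counit (R := k) ∘ₗ mulLeft k h)
          (counit (R := k) ∘ₗ mulRight k l)) (comul (R := k) g)))
    (g : H) :
    lTensor H (wεsₗ k H) (comul (R := k) g)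
      = TensorProduct.map (mulLeft k g) (wεsₗ k H) (comul (R := k) 1) := by
  have hg : (TensorProduct.rid k H).toLinearMap ∘ₗ lTensor H (counit (R := k)) ∘ₗ
      mulLeft k (comul (R := k) g) ∘ₗ comul (R := k) = mulLeft k g := by
    ext x; simp [← hcomul]
  rw [← hg, ← lTensor_wεs_mul_comul_one hcounit, ← hcomul, mul_one]

end SourceMap

section PartialAction

variable {k : Type*} [Field k] {H : Type*} [Ring H] [Algebra k H]
  {C : Type*} [AddCommGroup C] [Module k C] [Coalgebra k C]

/-- `x ⊗ y ↦ Σ (h x · c₁) ε(y · c₂)`, so that `pmc3RHS act h g c` is its value at `Δ g`. -/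
def pmc3RHSₗ (act : H →ₗ[k] C →ₗ[k] C) (h : H) (c : C) : H ⊗[k] H →ₗ[k] C :=
  (TensorProduct.rid k C).toLinearMap ∘ₗ
    TensorProduct.map (TensorProduct.lift act ∘ₗ rTensor C (mulLeft k h))
      (counit (R := k) ∘ₗ TensorProduct.lift act) ∘ₗ
    (TensorProduct.tensorTensorTensorComm k H H C C).toLinearMap ∘ₗ
    (TensorProduct.mk k (H ⊗[k] H) (C ⊗[k] C)).flip (comul (R := k) c)

lemma pmc3RHSₗ_comul [Coalgebra k H] (act : H →ₗ[k] C →ₗ[k] C) (h g : H) (c : C) :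
    pmc3RHSₗ act h c (comul (R := k) g) = pmc3RHS k H C act h g c := rfl

lemma pmc3RHSₗ_mul (act : H →ₗ[k] C →ₗ[k] C) (h g : H) (c : C) :
    pmc3RHSₗ act (h * g) c = pmc3RHSₗ act h c ∘ₗ rTensor H (mulLeft k g) := by
  refine TensorProduct.ext' fun a b => ?_
  simp only [pmc3RHSₗ, comp_apply, rTensor_tmul, mulLeft_apply, TensorProduct.mk_apply,
    flip_apply, LinearEquiv.coe_coe]
  generalize comul (R := k) c = q
  induction q using TensorProduct.induction_on with
  | zero => simp
  | tmul c₁ c₂ => simp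
  | add u v hu hv => simp only [TensorProduct.tmul_add, map_add, hu, hv]

lemma pmc3RHSₗ_comp_lTensor_wεs [Coalgebra k H] (act : H →ₗ[k] C →ₗ[k] C)
    (hε : ∀ (x : H) (d : C), counit (R := k) (act x d) = counit (R := k) (act (wεs k H x) d))
    (h : H) (c : C) :
    pmc3RHSₗ act h c ∘ₗ lTensor H (wεsₗ k H) = pmc3RHSₗ act h c := by
  refine TensorProduct.ext' fun a b => ?_
  simp only [pmc3RHSₗ, comp_apply, lTensor_tmul, TensorProduct.mk_apply,
    flip_apply, LinearEquiv.coe_coe]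
  generalize comul (R := k) c = q
  induction q using TensorProduct.induction_on with
  | zero => simp
  | tmul c₁ c₂ => simp [← hε]
  | add u v hu hv => simp only [TensorProduct.tmul_add, map_add, hu, hv]

end PartialAction

/-- A left partial `H`-module coalgebra `C` is a (global) left `H`-module
coalgebra via the same action map if and only if `ε(h·c) = ε(ε_s(h)·c)` for all `h, c`. -/
theorem partial_module_coalgebra_global_iff
    (k : Type*) [Field k] (H : Type*) [Ring H] [Algebra k H] [Coalgebra k H]
    (C : Type*) [AddCommGroup C] [Module k C] [Coalgebra k C]
    (wh : WeakHopf k H) (act : H →ₗ[k] C →ₗ[k] C)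
    (hp : IsPartialModuleCoalgebra k H C act) :
    IsModuleCoalgebra k H C act ↔
      ∀ (h : H) (c : C),
        counit (R := k) (act h c) = counit (R := k) (act (wεs k H h) c) := by
  refine ⟨IsModuleCoalgebra.mc4, fun hε => ⟨hp.pmc1, hp.pmc2, fun h g c => ?_, hε⟩⟩
  set Φ := pmc3RHSₗ act h c
  calc act h (act g c)
      = Φ (lTensor H (wεsₗ k H) (comul (R := k) g)) := by
        rw [hp.pmc3, ← pmc3RHSₗ_comul]
        exact (LinearMap.congr_fun (pmc3RHSₗ_comp_lTensor_wεs act hε h c) _).symm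
    _ = Φ (lTensor H (wεsₗ k H) (rTensor H (mulLeft k g) (comul (R := k) 1))) := by
        rw [lTensor_wεs_comul wh.comul_mul wh.counit_weak_mul, ← lTensor_comp_rTensor,
          comp_apply]
    _ = pmc3RHSₗ act (h * g) c (comul (R := k) 1) := by
        rw [pmc3RHSₗ_mul, comp_apply]
        exact LinearMap.congr_fun (pmc3RHSₗ_comp_lTensor_wεs act hε h c) _
    _ = act (h * g) c := by rw [pmc3RHSₗ_comul, ← hp.pmc3, hp.pmc1]
end

section
/- Let H be a weak Hopf algebra with H = H_t. Then every left partial H-module coalgebra is a left H-module coalgebra (via the same action map). -/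
open TensorProduct Coalgebra

/-! Write `Δ(1) = 1₁ ⊗ 1₂`. Applying `ε(- h) ⊗ ε ⊗ id` to `(1 ⊗ Δ(1))(Δ(1) ⊗ 1) = Δ²(1)` shows that
`ε_t` is idempotent, so `H = H_t` forces `ε_t = id`. Applying `ε(- z) ⊗ id ⊗ id` to the other
expression of `Δ²(1)` gives `Δ(ε_t(z)) = (ε_t(z) ⊗ 1) Δ(1)`, hence `Δ(z) = (z ⊗ 1) Δ(1)` for every
`z`. Then (PMC3) turns `h·(g·c)` into `(hg)·(1·c) = hg·c`, which is (MC3). Moreover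
`z = ε(z 1₁) 1₂`, so `z` is detected by the functionals `ε(z -)`; since `ε(ε_s(h) y) = ε(h y)`,
this gives `ε_s = id` and hence (MC4). -/

section WeakBialgebra

variable {k : Type*} [Field k] {H : Type*} [Ring H] [Algebra k H] [Coalgebra k H]

theorem wεt_eq_sum {ι : Type*} (r : Coalgebra.Repr k (1 : H) ι) (h : H) :
    wεt k H h = ∑ i ∈ r.index, counit (R := k) (r.left i * h) • r.right i := by
  simp [wεt, ← r.eq, map_sum]

theorem wεs_eq_sum {ι : Type*} (r : Coalgebra.Repr k (1 : H) ι) (h : H) :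
    wεs k H h = ∑ i ∈ r.index, counit (R := k) (h * r.right i) • r.left i := by
  simp [wεs, ← r.eq, map_sum]

theorem wεt_wεt
    (h_comul_one : ((1 : H) ⊗ₜ[k] comul (R := k) (1 : H))
          * ((TensorProduct.assoc k H H H) (comul (R := k) (1 : H) ⊗ₜ[k] (1 : H)))
        = (LinearMap.lTensor H (comul (R := k))) (comul (R := k) (1 : H))) (h : H) :
    wεt k H (wεt k H h) = wεt k H h := by
  let r := Coalgebra.Repr.arbitrary k (1 : H)
  have key := congrArg ((TensorProduct.lid k H).toLinearMap ∘ₗ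
    TensorProduct.map (counit ∘ₗ LinearMap.mulRight k h)
      ((TensorProduct.lid k H).toLinearMap ∘ₗ LinearMap.rTensor H counit)) h_comul_one
  rw [← r.eq] at key
  simp only [tmul_sum, sum_tmul, map_sum, assoc_tmul, Finset.mul_sum, Finset.sum_mul,
    Algebra.TensorProduct.tmul_mul_tmul, one_mul, mul_one, LinearMap.coe_comp,
    LinearEquiv.coe_coe, Function.comp_apply, map_tmul, LinearMap.mulRight_apply,
    LinearMap.rTensor_tmul, lid_tmul, tmul_smul, map_smul, LinearMap.lTensor_tmul,
    rTensor_counit_comul, one_smul] at key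
  rw [wεt_eq_sum r, wεt_eq_sum r h]
  refine Eq.trans ?_ key
  simp only [Finset.mul_sum, mul_smul_comm, map_sum, map_smul, smul_eq_mul, Finset.sum_smul,
    smul_smul]
  rw [Finset.sum_comm]
  simp only [mul_comm]

theorem comul_wεt
    (h_comul_one : ((TensorProduct.assoc k H H H) (comul (R := k) (1 : H) ⊗ₜ[k] (1 : H)))
          * ((1 : H) ⊗ₜ[k] comul (R := k) (1 : H))
        = (LinearMap.lTensor H (comul (R := k))) (comul (R := k) (1 : H))) (z : H) :
    comul (R := k) (wεt k H z) = (wεt k H z ⊗ₜ[k] 1) * comul (R := k) (1 : H) := by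
  let r := Coalgebra.Repr.arbitrary k (1 : H)
  have key := congrArg ((TensorProduct.lid k (H ⊗[k] H)).toLinearMap ∘ₗ
    LinearMap.rTensor (H ⊗[k] H) (counit ∘ₗ LinearMap.mulRight k z)) h_comul_one
  rw [← r.eq] at key
  simp only [sum_tmul, map_sum, assoc_tmul, tmul_sum, Finset.mul_sum, Finset.sum_mul,
    Algebra.TensorProduct.tmul_mul_tmul, mul_one, one_mul, LinearMap.coe_comp,
    LinearEquiv.coe_coe, Function.comp_apply, LinearMap.rTensor_tmul, LinearMap.mulRight_apply,
    lid_tmul, LinearMap.lTensor_tmul] at key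
  rw [wεt_eq_sum r, map_sum]
  simp only [map_smul]
  rw [← key, ← r.eq]
  simp only [Finset.mul_sum, Finset.sum_mul, Algebra.TensorProduct.tmul_mul_tmul, one_mul,
    smul_mul_assoc, sum_tmul, smul_tmul']

theorem counit_wεs_mul
    (h_counit : ∀ h g l : H, counit (R := k) (h * g * l)
      = LinearMap.mul' k k
          ((TensorProduct.map (counit (R := k) ∘ₗ LinearMap.mulLeft k h)
              (counit (R := k) ∘ₗ LinearMap.mulRight k l))
            ((TensorProduct.comm k H H) (comul (R := k) g)))) (g y : H) :
    counit (R := k) (wεs k H g * y) = counit (R := k) (g * y) := by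
  let r := Coalgebra.Repr.arbitrary k (1 : H)
  have key := h_counit g 1 y
  rw [mul_one, ← r.eq] at key
  simp only [map_sum, comm_tmul, map_tmul, LinearMap.coe_comp, Function.comp_apply,
    LinearMap.mulLeft_apply, LinearMap.mulRight_apply, LinearMap.mul'_apply] at key
  rw [wεs_eq_sum r, key]
  simp only [Finset.sum_mul, smul_mul_assoc, map_sum, map_smul, smul_eq_mul]

theorem eq_zero_of_forall_counit_mul_eq_zero
    (h_comul : ∀ z : H, comul (R := k) z = (z ⊗ₜ[k] 1) * comul (R := k) (1 : H)) {z : H}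
    (hz : ∀ y, counit (R := k) (z * y) = 0) : z = 0 := by
  let r := Coalgebra.Repr.arbitrary k (1 : H)
  have key := congrArg ((TensorProduct.lid k H).toLinearMap ∘ₗ LinearMap.rTensor H counit)
    (h_comul z)
  rw [← r.eq] at key
  simpa only [LinearMap.coe_comp, LinearEquiv.coe_coe, Function.comp_apply, rTensor_counit_comul,
    lid_tmul, one_smul, Finset.mul_sum, Algebra.TensorProduct.tmul_mul_tmul, one_mul, map_sum,
    LinearMap.rTensor_tmul, hz, zero_tmul, map_zero, Finset.sum_const_zero] using key

theorem wεs_eq_self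
    (h_counit : ∀ h g l : H, counit (R := k) (h * g * l)
      = LinearMap.mul' k k
          ((TensorProduct.map (counit (R := k) ∘ₗ LinearMap.mulLeft k h)
              (counit (R := k) ∘ₗ LinearMap.mulRight k l))
            ((TensorProduct.comm k H H) (comul (R := k) g))))
    (h_comul : ∀ z : H, comul (R := k) z = (z ⊗ₜ[k] 1) * comul (R := k) (1 : H)) (h : H) :
    wεs k H h = h :=
  sub_eq_zero.mp <| eq_zero_of_forall_counit_mul_eq_zero h_comul fun y => by
    rw [sub_mul, map_sub, counit_wεs_mul h_counit, sub_self]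

end WeakBialgebra

section PartialAction

variable {k : Type*} [Field k] {H : Type*} [Ring H] [Algebra k H] [Coalgebra k H]
  {C : Type*} [AddCommGroup C] [Module k C] [Coalgebra k C]

theorem pmc3RHS_eq_of_comul_eq (act : H →ₗ[k] C →ₗ[k] C) {h g : H} (c : C)
    (hg : comul (R := k) g = (g ⊗ₜ[k] 1) * comul (R := k) (1 : H)) :
    pmc3RHS k H C act h g c = pmc3RHS k H C act (h * g) 1 c := by
  have key :
      TensorProduct.map (TensorProduct.lift act ∘ₗ LinearMap.rTensor C (LinearMap.mulLeft k h))
          (counit (R := k) ∘ₗ TensorProduct.lift act)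
        ∘ₗ (TensorProduct.tensorTensorTensorComm k H H C C).toLinearMap
        ∘ₗ LinearMap.rTensor (C ⊗[k] C) (LinearMap.mulLeft k (g ⊗ₜ[k] (1 : H)))
      = TensorProduct.map
          (TensorProduct.lift act ∘ₗ LinearMap.rTensor C (LinearMap.mulLeft k (h * g)))
          (counit (R := k) ∘ₗ TensorProduct.lift act)
        ∘ₗ (TensorProduct.tensorTensorTensorComm k H H C C).toLinearMap := by
    ext a b c d
    simp
  simpa [pmc3RHS, hg] using
    congrArg (TensorProduct.rid k C) (LinearMap.congr_fun key (comul (1 : H) ⊗ₜ[k] comul c))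

theorem IsPartialModuleCoalgebra.act_act_of_comul_eq {act : H →ₗ[k] C →ₗ[k] C}
    (hp : IsPartialModuleCoalgebra k H C act) {g : H}
    (hg : comul (R := k) g = (g ⊗ₜ[k] 1) * comul (R := k) (1 : H)) (h : H) (c : C) :
    act h (act g c) = act (h * g) c := by
  rw [hp.pmc3, pmc3RHS_eq_of_comul_eq act c hg, ← hp.pmc3, hp.pmc1]

end PartialAction

/-- If `H = H_t`, then every left partial `H`-module coalgebra is a left
`H`-module coalgebra via the same action map. -/
theorem partial_is_global_of_target_eq_top
    (k : Type*) [Field k] (H : Type*) [Ring H] [Algebra k H] [Coalgebra k H]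
    (wh : WeakHopf k H) (hHt : ∀ h : H, h ∈ Set.range (wεt k H))
    (C : Type*) [AddCommGroup C] [Module k C] [Coalgebra k C]
    (act : H →ₗ[k] C →ₗ[k] C)
    (hp : IsPartialModuleCoalgebra k H C act) :
    IsModuleCoalgebra k H C act := by
  have hεt : ∀ h : H, wεt k H h = h := fun h => by
    obtain ⟨h', rfl⟩ := hHt h
    exact wεt_wεt wh.comul_one_left h'
  have hΔ : ∀ g : H, comul (R := k) g = (g ⊗ₜ[k] 1) * comul (R := k) (1 : H) := fun g => by
    simpa only [hεt] using comul_wεt wh.comul_one_right g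
  have hεs : ∀ h : H, wεs k H h = h := wεs_eq_self wh.counit_weak_mul' hΔ
  exact ⟨hp.pmc1, hp.pmc2, fun h g c => hp.act_act_of_comul_eq (hΔ g) h c,
    fun h c => by rw [hεs]⟩
end

section
/- Let 𝒢 be a groupoid with 𝒢₀ finite acting partially on a coalgebra C via ({θ_g},{C_g},{P_g}), and suppose C = ⊕_{e∈𝒢₀} C_e. Then the maps α_g := θ_g∘P_{g⁻¹} define a symmetric left partial action of the groupoid algebra k𝒢 on C; explicitly: Σ_{e∈𝒢₀} α_e = id_C; Δ(α_g(c)) = α_g(c₁)⊗α_g(c₂) for all g ∈ 𝒢, c ∈ C; and for all g,h ∈ 𝒢 and c ∈ C, α_g(α_h(c)) = α_{gh}(c₁)ε(α_h(c₂)) = ε(α_h(c₁))α_{gh}(c₂) if gh is defined, while α_g(α_h(c)) = 0 if gh is not defined. -/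
open TensorProduct Coalgebra

/-- A groupoid in the sense of partial action theory: a set with a partially defined
product (`defined g h` expresses that `g h` exists; `mul g h` is the product, with junk
value otherwise) and inverses, with `d(g) = g⁻¹g`, `r(g) = gg⁻¹`. -/
structure Gpd (G : Type*) where
  defined : G → G → Prop
  mul : G → G → G
  inv : G → G
  defined_mul_inv : ∀ g, defined g (inv g)
  defined_inv_mul : ∀ g, defined (inv g) g
  /-- `∃ gh` iff `d(g) = r(h)` -/
  defined_iff : ∀ g h, defined g h ↔ mul (inv g) g = mul h (inv h)
  mul_assoc' : ∀ g h l, defined g h → defined h l → mul (mul g h) l = mul g (mul h l)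
  defined_mul_left : ∀ g h l, defined g h → defined h l → defined (mul g h) l
  defined_mul_right : ∀ g h l, defined g h → defined h l → defined g (mul h l)
  /-- `g d(g) = g` -/
  mul_d : ∀ g, mul g (mul (inv g) g) = g
  /-- `r(g) g = g` -/
  r_mul : ∀ g, mul (mul g (inv g)) g = g
  inv_inv : ∀ g, inv (inv g) = g

namespace Gpd

variable {G : Type*} (S : Gpd G)

/-- `d(g) = g⁻¹ g`. -/
def d (g : G) : G := S.mul (S.inv g) g

/-- `r(g) = g g⁻¹`. -/
def r (g : G) : G := S.mul g (S.inv g)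

/-- `e` is an identity element of the groupoid. -/
def IsIdent (e : G) : Prop := ∃ g : G, e = S.d g

end Gpd

noncomputable section

variable (k : Type*) [Field k]
variable {G : Type*}
variable (C : Type*) [AddCommGroup C] [Module k C] [Coalgebra k C]

/-- A structure of left partial `k𝒢`-module coalgebra on `C`, described by the family of
linear maps `α_g(c) = δ_g · c` (`E` is the finite set of identity elements of `𝒢`):
`Σ_{e ∈ 𝒢₀} α_e = id` (PMC1); `Δ(δ_g · c) = (δ_g · c₁) ⊗ (δ_g · c₂)` (PMC2); and
`δ_g·(δ_h·c) = (δ_{gh}·c₁) ε(δ_h·c₂)` when `gh` is defined, and `0` otherwise (PMC3). -/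
structure IsGpdPartialModuleCoalgebra (S : Gpd G) (E : Finset G)
    (α : G → (C →ₗ[k] C)) : Prop where
  ident_sum : ∑ e ∈ E, α e = LinearMap.id
  comul_compat : ∀ (g : G) (c : C),
      comul (R := k) (α g c) = TensorProduct.map (α g) (α g) (comul (R := k) c)
  comp_defined : ∀ (g h : G) (c : C), S.defined g h →
      α g (α h c)
        = (TensorProduct.rid k C)
            ((TensorProduct.map (α (S.mul g h)) (counit (R := k) ∘ₗ α h)) (comul (R := k) c))
  comp_undefined : ∀ (g h : G) (c : C), ¬ S.defined g h → α g (α h c) = 0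

/-- A *symmetric* left partial `k𝒢`-module coalgebra structure: additionally
`δ_g·(δ_h·c) = ε(δ_h·c₁) (δ_{gh}·c₂)` when `gh` is defined. -/
structure IsGpdSymmetricPartialModuleCoalgebra (S : Gpd G) (E : Finset G)
    (α : G → (C →ₗ[k] C))
    extends IsGpdPartialModuleCoalgebra k C S E α : Prop where
  comp_defined' : ∀ (g h : G) (c : C), S.defined g h →
      α g (α h c)
        = (TensorProduct.lid k C)
            ((TensorProduct.map (counit (R := k) ∘ₗ α h) (α (S.mul g h))) (comul (R := k) c))

end

noncomputable section

open scoped Classical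

variable (k : Type*) [Field k]
variable {G : Type*}
variable (C : Type*) [AddCommGroup C] [Module k C] [Coalgebra k C]

/-- A partial action of a groupoid `𝒢` on a coalgebra `C`: a family of subcoalgebras
`C_g`, coalgebra isomorphisms `θ_g : C_{g⁻¹} → C_g` (encoded as global linear maps, whose
behaviour only matters on `C_{g⁻¹}`) and linear projections `P_g : C → C` onto `C_g`,
subject to the axioms of Definition "partial groupoid action on a coalgebra". -/
structure GpdCoaction (S : Gpd G) where
  Csub : G → Submodule k C
  θ : G → (C →ₗ[k] C)
  P : G → (C →ₗ[k] C)
  /-- each `C_g` is a subcoalgebra -/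
  Csub_subcoalgebra : ∀ g : G, ∀ c ∈ Csub g,
      comul (R := k) c
        ∈ LinearMap.range (TensorProduct.map (Csub g).subtype (Csub g).subtype)
  P_proj : ∀ g : G, (P g) ∘ₗ (P g) = P g
  P_range : ∀ g : G, LinearMap.range (P g) = Csub g
  /-- `(P_g ⊗ P_g)Δ = Δ P_g` -/
  P_comul : ∀ (g : G) (c : C),
      TensorProduct.map (P g) (P g) (comul (R := k) c) = comul (R := k) (P g c)
  /-- `P_g(c) = P_{r(g)}(c₁) ε(P_g(c₂))` -/
  P_quasi : ∀ (g : G) (c : C),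
      P g c = (TensorProduct.rid k C)
          ((TensorProduct.map (P (S.r g)) (counit (R := k) ∘ₗ P g)) (comul (R := k) c))
  /-- `P_g(c) = P_{r(g)}(c₂) ε(P_g(c₁))` -/
  P_quasi' : ∀ (g : G) (c : C),
      P g c = (TensorProduct.lid k C)
          ((TensorProduct.map (counit (R := k) ∘ₗ P g) (P (S.r g))) (comul (R := k) c))
  /-- `θ_e = id_{C_e}` for identities `e` -/
  θ_ident : ∀ e : G, S.IsIdent e → ∀ c ∈ Csub e, θ e c = c
  /-- `θ_g` maps `C_{g⁻¹}` into `C_g` -/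
  θ_maps : ∀ g : G, ∀ c ∈ Csub (S.inv g), θ g c ∈ Csub g
  /-- `θ_g` is injective on `C_{g⁻¹}` -/
  θ_inj : ∀ g : G, ∀ c ∈ Csub (S.inv g), ∀ c' ∈ Csub (S.inv g), θ g c = θ g c' → c = c'
  /-- `θ_g : C_{g⁻¹} → C_g` is surjective -/
  θ_surj : ∀ g : G, ∀ c ∈ Csub g, ∃ c' ∈ Csub (S.inv g), θ g c' = c
  /-- `θ_g` is comultiplicative on `C_{g⁻¹}` -/
  θ_comul : ∀ g : G, ∀ c ∈ Csub (S.inv g),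
      comul (R := k) (θ g c) = TensorProduct.map (θ g) (θ g) (comul (R := k) c)
  /-- `θ_g` is counital on `C_{g⁻¹}` -/
  θ_counit : ∀ g : G, ∀ c ∈ Csub (S.inv g), counit (R := k) (θ g c) = counit (R := k) c
  /-- the projections commute -/
  P_comm : ∀ g h : G, (P g) ∘ₗ (P h) = (P h) ∘ₗ (P g)
  /-- `θ_{h⁻¹} ∘ P_h ∘ P_{g⁻¹} = P_{(gh)⁻¹} ∘ θ_{h⁻¹} ∘ P_h` when `gh` is defined -/
  compat₂ : ∀ g h : G, S.defined g h →
      (θ (S.inv h)) ∘ₗ (P h) ∘ₗ (P (S.inv g))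
        = (P (S.inv (S.mul g h))) ∘ₗ (θ (S.inv h)) ∘ₗ (P h)
  /-- `θ_g ∘ θ_h ∘ P_{(gh)⁻¹} ∘ P_{h⁻¹} = θ_{gh} ∘ P_{(gh)⁻¹} ∘ P_{h⁻¹}` when `gh` is defined -/
  compat₃ : ∀ g h : G, S.defined g h →
      (θ g) ∘ₗ (θ h) ∘ₗ (P (S.inv (S.mul g h))) ∘ₗ (P (S.inv h))
        = (θ (S.mul g h)) ∘ₗ (P (S.inv (S.mul g h))) ∘ₗ (P (S.inv h))

end

open scoped Classical

/-
Set `α_g := θ_g ∘ P_{g⁻¹}`. Comultiplicativity of `α_g` is that of `θ_g` on `C_{g⁻¹}`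
together with `(P ⊗ P)Δ = ΔP`. When `gh` is defined, the axioms on `θ` give
`α_g α_h = θ_{gh} P_{(gh)⁻¹} P_{h⁻¹}`, and since `r((gh)⁻¹) = r(h⁻¹)` the quasi-projection
identity for `P_{h⁻¹}` splits `P_{(gh)⁻¹} P_{h⁻¹}(c)` as `P_{(gh)⁻¹}(c₁) ε(P_{h⁻¹}(c₂))`;
`θ_h` preserves the counit, which yields both forms of the composition law. When `gh` is
not defined, `α_g α_h(c)` passes through `C_{r(g⁻¹)} ∩ C_{r(h)} = C_{d(g)} ∩ C_{r(h)}`, and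
these two summands of `C = ⊕_{e ∈ 𝒢₀} C_e` are distinct. The same decomposition shows
that `α_e = P_e` for `e ∈ 𝒢₀` sum to the identity.
-/

namespace Gpd

variable {G : Type*} (S : Gpd G)

lemma isIdent_d (g : G) : S.IsIdent (S.d g) := ⟨g, rfl⟩

lemma isIdent_r (g : G) : S.IsIdent (S.r g) := ⟨S.inv g, by rw [Gpd.d, Gpd.r, S.inv_inv]⟩

lemma r_inv (g : G) : S.r (S.inv g) = S.d g := by
  rw [Gpd.d, Gpd.r, S.inv_inv]

lemma defined_self_d (g : G) : S.defined (S.d g) (S.d g) :=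
  S.defined_mul_left _ _ _ (S.defined_inv_mul g)
    (S.defined_mul_right _ _ _ (S.defined_mul_inv g) (S.defined_inv_mul g))

lemma d_mul_self (g : G) : S.mul (S.d g) (S.d g) = S.d g := by
  rw [Gpd.d, S.mul_assoc' _ _ _ (S.defined_inv_mul g)
    (S.defined_mul_right _ _ _ (S.defined_mul_inv g) (S.defined_inv_mul g)), S.mul_d]

variable {S} {e : G}

lemma defined_self_of_isIdent (he : S.IsIdent e) : S.defined e e := by
  obtain ⟨g, rfl⟩ := he
  exact S.defined_self_d g

lemma d_of_isIdent (he : S.IsIdent e) : S.d e = e := by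
  obtain ⟨g, rfl⟩ := he
  have hdr : S.d (S.d g) = S.r (S.d g) := (S.defined_iff _ _).mp (S.defined_self_d g)
  calc S.d (S.d g)
      = S.mul (S.inv (S.d g)) (S.mul (S.d g) (S.d g)) := by rw [S.d_mul_self, Gpd.d]
    _ = S.mul (S.r (S.d g)) (S.d g) := by
        rw [← S.mul_assoc' _ _ _ (S.defined_inv_mul _) (S.defined_self_d g), ← Gpd.d, hdr]
    _ = S.d g := S.r_mul _

lemma r_of_isIdent (he : S.IsIdent e) : S.r e = e := by
  rw [Gpd.r, ← (S.defined_iff e e).mp (defined_self_of_isIdent he)]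
  exact d_of_isIdent he

lemma inv_of_isIdent (he : S.IsIdent e) : S.inv e = e := by
  have h := S.mul_d (S.inv e)
  rw [S.inv_inv, ← Gpd.r, r_of_isIdent he, ← Gpd.d, d_of_isIdent he] at h
  exact h.symm

variable {g h : G}

lemma defined_mul_inv_right (hgh : S.defined g h) : S.defined (S.mul g h) (S.inv h) :=
  S.defined_mul_left g h (S.inv h) hgh (S.defined_mul_inv h)

lemma mul_mul_inv_cancel (hgh : S.defined g h) : S.mul (S.mul g h) (S.inv h) = g := by
  rw [S.mul_assoc' g h (S.inv h) hgh (S.defined_mul_inv h), ← (S.defined_iff g h).mp hgh,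
    S.mul_d]

lemma d_mul (hgh : S.defined g h) : S.d (S.mul g h) = S.d h := by
  simpa only [Gpd.d, S.inv_inv] using (S.defined_iff _ _).mp (defined_mul_inv_right hgh)

lemma r_inv_mul (hgh : S.defined g h) : S.r (S.inv (S.mul g h)) = S.r (S.inv h) := by
  rw [S.r_inv, S.r_inv, d_mul hgh]

end Gpd

namespace TensorProduct

variable {R M N : Type*} [CommSemiring R] [AddCommMonoid M] [AddCommMonoid N]
  [Module R M] [Module R N]

lemma rid_naturality (f : M →ₗ[R] N) (t : M ⊗[R] R) :
    f (TensorProduct.rid R M t) = TensorProduct.rid R N (map f LinearMap.id t) := by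
  induction t using TensorProduct.induction_on with
  | zero => simp
  | tmul x a => simp
  | add x y hx hy => simp [hx, hy]

lemma lid_naturality (f : M →ₗ[R] N) (t : R ⊗[R] M) :
    f (TensorProduct.lid R M t) = TensorProduct.lid R N (map LinearMap.id f t) := by
  induction t using TensorProduct.induction_on with
  | zero => simp
  | tmul a x => simp
  | add x y hx hy => simp [hx, hy]

end TensorProduct

namespace GpdCoaction

open Function TensorProduct Coalgebra

variable {k G C : Type*} [Field k] [AddCommGroup C] [Module k C] [Coalgebra k C] {S : Gpd G}
  (A : GpdCoaction k C S)

def act (g : G) : C →ₗ[k] C := A.θ g ∘ₗ A.P (S.inv g)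

lemma P_apply_mem (g : G) (c : C) : A.P g c ∈ A.Csub g := by
  rw [← A.P_range g]
  exact LinearMap.mem_range_self _ c

lemma P_apply_of_mem {g : G} {x : C} (hx : x ∈ A.Csub g) : A.P g x = x := by
  rw [← A.P_range g] at hx
  obtain ⟨y, rfl⟩ := hx
  exact LinearMap.congr_fun (A.P_proj g) y

lemma P_r_P_apply (g : G) (c : C) : A.P (S.r g) (A.P g c) = A.P g c := by
  conv_lhs => rw [A.P_quasi g c]
  rw [rid_naturality, map_map, LinearMap.id_comp, A.P_proj, ← A.P_quasi]

lemma Csub_le_Csub_r (g : G) : A.Csub g ≤ A.Csub (S.r g) := by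
  intro x hx
  rw [← A.P_apply_of_mem hx, ← P_r_P_apply]
  exact A.P_apply_mem _ _

lemma P_comp_P_r (g : G) : A.P g ∘ₗ A.P (S.r g) = A.P g := by
  rw [A.P_comm]
  exact LinearMap.ext (A.P_r_P_apply g)

/-- `P_g x` lies in `C_g ∩ C_h ⊆ C_{r(g)} ∩ C_{r(h)}` because the projections commute. -/
lemma P_apply_eq_zero_of_disjoint {g h : G} {x : C} (hx : x ∈ A.Csub h)
    (hgh : Disjoint (A.Csub (S.r g)) (A.Csub (S.r h))) : A.P g x = 0 := by
  have hPh : A.P g x = A.P h (A.P g x) := by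
    conv_lhs => rw [← A.P_apply_of_mem hx]
    exact LinearMap.congr_fun (A.P_comm g h) x
  refine Submodule.disjoint_def.mp hgh _ (A.Csub_le_Csub_r g (A.P_apply_mem g x)) ?_
  exact A.Csub_le_Csub_r h (hPh ▸ A.P_apply_mem h _)

lemma act_of_isIdent {e : G} (he : S.IsIdent e) : A.act e = A.P e := by
  ext c
  rw [act, LinearMap.comp_apply, Gpd.inv_of_isIdent he]
  exact A.θ_ident e he _ (A.P_apply_mem e c)

lemma act_apply_mem (g : G) (c : C) : A.act g c ∈ A.Csub g :=
  A.θ_maps g _ (A.P_apply_mem _ c)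

lemma comul_act (g : G) (c : C) :
    comul (R := k) (A.act g c) = map (A.act g) (A.act g) (comul (R := k) c) := by
  rw [act, LinearMap.comp_apply, A.θ_comul g _ (A.P_apply_mem _ c), ← A.P_comul, map_map]

lemma counit_comp_act (g : G) :
    (counit : C →ₗ[k] k) ∘ₗ A.act g = (counit : C →ₗ[k] k) ∘ₗ A.P (S.inv g) :=
  LinearMap.ext fun c => A.θ_counit g _ (A.P_apply_mem _ c)

variable {g h : G}

/-- `compat₂` for the pair `(gh, h⁻¹)` moves `P_{g⁻¹}` past `θ_h`; then `compat₃` applies. -/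
lemma act_act (hgh : S.defined g h) (c : C) :
    A.act g (A.act h c) = A.act (S.mul g h) (A.P (S.inv h) c) := by
  have h₂ := A.compat₂ (S.mul g h) (S.inv h) (S.defined_mul_inv_right hgh)
  rw [S.inv_inv, S.mul_mul_inv_cancel hgh] at h₂
  have hcomm := LinearMap.congr_fun (A.P_comm (S.inv h) (S.inv (S.mul g h))) c
  calc A.act g (A.act h c)
      = A.θ g ((A.P (S.inv g) ∘ₗ A.θ h ∘ₗ A.P (S.inv h)) c) := rfl
    _ = A.θ g ((A.θ h ∘ₗ A.P (S.inv h) ∘ₗ A.P (S.inv (S.mul g h))) c) := by rw [h₂]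
    _ = (A.θ g ∘ₗ A.θ h ∘ₗ A.P (S.inv (S.mul g h)) ∘ₗ A.P (S.inv h)) c := by
        simp only [LinearMap.comp_apply] at hcomm ⊢
        rw [hcomm]
    _ = A.act (S.mul g h) (A.P (S.inv h) c) := by rw [A.compat₃ g h hgh]; rfl

lemma P_inv_mul_comp_P_r_inv (hgh : S.defined g h) :
    A.P (S.inv (S.mul g h)) ∘ₗ A.P (S.r (S.inv h)) = A.P (S.inv (S.mul g h)) := by
  rw [← S.r_inv_mul hgh, P_comp_P_r]

lemma act_act_eq_rid (hgh : S.defined g h) (c : C) :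
    A.act g (A.act h c) = TensorProduct.rid k C
      (map (A.act (S.mul g h)) ((counit : C →ₗ[k] k) ∘ₗ A.act h) (comul (R := k) c)) := by
  rw [A.act_act hgh, A.P_quasi (S.inv h) c, rid_naturality, map_map, act,
    LinearMap.comp_assoc, A.P_inv_mul_comp_P_r_inv hgh, LinearMap.id_comp,
    A.counit_comp_act]

lemma act_act_eq_lid (hgh : S.defined g h) (c : C) :
    A.act g (A.act h c) = TensorProduct.lid k C
      (map ((counit : C →ₗ[k] k) ∘ₗ A.act h) (A.act (S.mul g h)) (comul (R := k) c)) := by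
  rw [A.act_act hgh, A.P_quasi' (S.inv h) c, lid_naturality, map_map, act,
    LinearMap.comp_assoc, A.P_inv_mul_comp_P_r_inv hgh, LinearMap.id_comp,
    A.counit_comp_act]

lemma act_act_of_not_defined
    (hdisj : Pairwise (Disjoint on fun e : {x : G // S.IsIdent x} => A.Csub e.val))
    (hgh : ¬ S.defined g h) (c : C) : A.act g (A.act h c) = 0 := by
  have hne : S.d g ≠ S.r h := fun h' => hgh ((S.defined_iff g h).mpr h')
  have hdisj' : Disjoint (A.Csub (S.r (S.inv g))) (A.Csub (S.r h)) := by
    rw [S.r_inv]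
    exact hdisj (i := ⟨_, S.isIdent_d g⟩) (j := ⟨_, S.isIdent_r h⟩) (by simpa using hne)
  rw [act, LinearMap.comp_apply, A.P_apply_eq_zero_of_disjoint (A.act_apply_mem h c) hdisj',
    map_zero]

lemma sum_act_eq_id
    (hdisj : Pairwise (Disjoint on fun e : {x : G // S.IsIdent x} => A.Csub e.val))
    {E : Finset G} (hE : ∀ e : G, e ∈ E ↔ S.IsIdent e)
    (hspan : ⨆ e : {x : G // S.IsIdent x}, A.Csub e.val = ⊤) :
    ∑ e ∈ E, A.act e = LinearMap.id := by
  rw [Finset.sum_congr rfl fun e he => A.act_of_isIdent ((hE e).mp he)]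
  refine LinearMap.ext_on (s := ⋃ e : {x : G // S.IsIdent x}, A.Csub e.val)
    (by rw [← Submodule.iSup_eq_span, hspan]) ?_
  intro x hx
  obtain ⟨⟨i, hi⟩, hx⟩ := Set.mem_iUnion.mp hx
  rw [LinearMap.sum_apply, LinearMap.id_apply, Finset.sum_eq_single i _
    fun hiE => absurd ((hE i).mpr hi) hiE]
  · exact A.P_apply_of_mem hx
  intro e he hei
  refine A.P_apply_eq_zero_of_disjoint hx ?_
  rw [Gpd.r_of_isIdent ((hE e).mp he), Gpd.r_of_isIdent hi]
  exact hdisj (i := ⟨e, (hE e).mp he⟩) (j := ⟨i, hi⟩) (by simpa using hei)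

end GpdCoaction

/-- If a groupoid `𝒢` (with `𝒢₀` finite) acts partially on a coalgebra
`C` with `C = ⊕_{e ∈ 𝒢₀} C_e`, then the maps `α_g := θ_g ∘ P_{g⁻¹}` define a symmetric
left partial action of the groupoid algebra `k𝒢` on `C`. -/
theorem gpd_coaction_gives_symmetric_partial_module_coalgebra
    (k : Type*) [Field k] {G : Type*}
    (C : Type*) [AddCommGroup C] [Module k C] [Coalgebra k C]
    (S : Gpd G) (E : Finset G) (hE : ∀ e : G, e ∈ E ↔ S.IsIdent e)
    (A : GpdCoaction k C S)
    (hdsum : DirectSum.IsInternal (fun e : {x : G // S.IsIdent x} => A.Csub e.val)) :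
    IsGpdSymmetricPartialModuleCoalgebra k C S E
      (fun g => (A.θ g) ∘ₗ (A.P (S.inv g))) := by
  have hdisj := hdsum.submodule_iSupIndep.pairwiseDisjoint
  exact
    { ident_sum := A.sum_act_eq_id hdisj hE hdsum.submodule_iSup_eq_top
      comul_compat := A.comul_act
      comp_defined := fun _ _ c hgh => A.act_act_eq_rid hgh c
      comp_undefined := fun _ _ c hgh => A.act_act_of_not_defined hdisj hgh c
      comp_defined' := fun _ _ c hgh => A.act_act_eq_lid hgh c }
end
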